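/- Let {(A_q,B_q,C_q)}_{q=1}^Q define an affine LPV system with scheduling set P ⊆ ℝ^Q whose linear span is ℝ^Q. For states x_1, x_2 ∈ ℝ^n, the input-output maps from x_1 and x_2 agree for all inputs and all scheduling sequences with values in P if and only if they agree for all inputs and all scheduling sequences with values in {e_1,…,e_Q}; equivalently, iff x_1 − x_2 ∈ ⋂_{k≥1, q_1,…,q_k} ker(C_{q_k}A_{q_{k-1}}⋯A_{q_1}). -/

import Mathlib

open Matrix

/-- Product of `A`-matrices along a word: for `q : Fin k → Fin Qn`,
`wordProd A q = A_{q (k-1)} ⋯ A_{q 0}` (identity for the empty word). -/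
def wordProd {Qn n : ℕ} (A : Fin Qn → Matrix (Fin n) (Fin n) ℝ) :
    {k : ℕ} → (Fin k → Fin Qn) → Matrix (Fin n) (Fin n) ℝ
  | 0, _ => 1
  | k+1, q => A (q (Fin.last k)) * wordProd A (Fin.init q)

/-- State trajectory of the affine LPV system
`x(t+1) = ∑_q p_q(t) (A_q x(t) + B_q u(t))` from initial state `x0`. -/
def lpvState {Qn n m : ℕ} (A : Fin Qn → Matrix (Fin n) (Fin n) ℝ)
    (B : Fin Qn → Matrix (Fin n) (Fin m) ℝ)
    (u : ℕ → Fin m → ℝ) (p : ℕ → Fin Qn → ℝ) (x0 : Fin n → ℝ) : ℕ → Fin n → ℝ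
  | 0 => x0
  | t+1 => ∑ q : Fin Qn, p t q • (A q *ᵥ lpvState A B u p x0 t + B q *ᵥ u t)

/-- Output `y(t) = ∑_q p_q(t) C_q x(t)` of the affine LPV system from initial state `x0`. -/
def lpvOutput {Qn n m pd : ℕ} (A : Fin Qn → Matrix (Fin n) (Fin n) ℝ)
    (B : Fin Qn → Matrix (Fin n) (Fin m) ℝ)
    (C : Fin Qn → Matrix (Fin pd) (Fin n) ℝ)
    (u : ℕ → Fin m → ℝ) (p : ℕ → Fin Qn → ℝ) (x0 : Fin n → ℝ) (t : ℕ) : Fin pd → ℝ :=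
  ∑ q : Fin Qn, p t q • (C q *ᵥ lpvState A B u p x0 t)

/-!
By linearity, `x1` and `x2` are indistinguishable under `P`-valued scheduling iff `x1 - x2` lies
in the unobservable subspace `U_P`, the common kernel of the zero-input output maps
`(∑_q p_t(q) C_q) Φ_p(t)`, where `Φ_p(t) = M(p_{t-1}) ⋯ M(p_0)` and `M(v) = ∑_q v_q A_q`.
The word kernel `K = ⋂ ker (C_{q_k} A_{q_{k-1}} ⋯ A_{q_1})` is the largest subspace invariant
under every `A_q` and annihilated by every `C_q`; it is then invariant under every `M(v)`, so
`K ⊆ U_P`. Conversely, prepending `v ∈ P` to a scheduling sequence shows that `U_P` is invariant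
under `M(v)` and annihilated by `∑_q v_q C_q` for `v ∈ P`. Both conditions are linear in `v`, so
since `P` spans `ℝ^Q` they hold for `v = e_q`, whence `U_P ⊆ K`. Thus `U_P = K` for every spanning
`P`, in particular for the standard basis.
-/

lemma Fin.init_cons {α : Type*} {k : ℕ} (r : α) (w : Fin (k + 1) → α) :
    Fin.init (Fin.cons r w : Fin (k + 2) → α) = Fin.cons r (Fin.init w) := by
  funext i
  refine Fin.cases ?_ (fun j => ?_) i <;> simp [Fin.init]

lemma span_range_single (Qn : ℕ) :
    Submodule.span ℝ (Set.range fun q : Fin Qn => (Pi.single q 1 : Fin Qn → ℝ)) = ⊤ := by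
  convert (Pi.basisFun ℝ (Fin Qn)).span_eq
  simp

section WordKernel

variable {Qn n pd : ℕ} (A : Fin Qn → Matrix (Fin n) (Fin n) ℝ)
  (C : Fin Qn → Matrix (Fin pd) (Fin n) ℝ)

lemma wordProd_cons (r : Fin Qn) :
    ∀ {k : ℕ} (w : Fin k → Fin Qn), wordProd A (Fin.cons r w) = wordProd A w * A r
  | 0, _ => by simp [wordProd]
  | k + 1, w => by
    rw [wordProd, Fin.cons_last, Fin.init_cons, wordProd_cons r (Fin.init w), ← mul_assoc]
    rfl

def wordKernel : Submodule ℝ (Fin n → ℝ) :=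
  ⨅ (k : ℕ) (q : Fin (k + 1) → Fin Qn),
    LinearMap.ker (mulVecLin (C (q (Fin.last k)) * wordProd A (Fin.init q)))

variable {A C} in
lemma mem_wordKernel_iff {x : Fin n → ℝ} :
    x ∈ wordKernel A C ↔ ∀ (k : ℕ) (q : Fin (k + 1) → Fin Qn),
      C (q (Fin.last k)) *ᵥ (wordProd A (Fin.init q) *ᵥ x) = 0 := by
  simp [wordKernel, mulVec_mulVec]

lemma mulVec_eq_zero_of_mem_wordKernel {x : Fin n → ℝ} (hx : x ∈ wordKernel A C) (r : Fin Qn) :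
    C r *ᵥ x = 0 := by
  simpa [wordProd] using mem_wordKernel_iff.1 hx 0 fun _ => r

lemma mulVec_mem_wordKernel {x : Fin n → ℝ} (hx : x ∈ wordKernel A C) (r : Fin Qn) :
    A r *ᵥ x ∈ wordKernel A C := by
  refine mem_wordKernel_iff.2 fun k q => ?_
  simpa [Fin.init_cons, wordProd_cons, ← mulVec_mulVec] using
    mem_wordKernel_iff.1 hx (k + 1) (Fin.cons r q)

lemma le_wordKernel {S : Set (Fin n → ℝ)} (hA : ∀ x ∈ S, ∀ r, A r *ᵥ x ∈ S)
    (hC : ∀ x ∈ S, ∀ r, C r *ᵥ x = 0) : S ⊆ wordKernel A C := by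
  intro x hx
  refine mem_wordKernel_iff.2 fun k => ?_
  induction k generalizing x with
  | zero => intro q; simpa [wordProd] using hC x hx (q 0)
  | succ k ih =>
    refine Fin.consCases fun r w => ?_
    simpa [Fin.init_cons, wordProd_cons, ← mulVec_mulVec] using ih (hA x hx r) w

end WordKernel

section LinearCombination

variable {Qn k l : ℕ} (M : Fin Qn → Matrix (Fin k) (Fin l) ℝ) (x : Fin l → ℝ)

lemma linearCombination_mulVec (v : Fin Qn → ℝ) :
    Fintype.linearCombination ℝ M v *ᵥ x
      = Fintype.linearCombination ℝ (fun q => M q *ᵥ x) v := by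
  simp [Fintype.linearCombination_apply, sum_mulVec, smul_mulVec]

variable {M x}

lemma linearCombination_mulVec_mem {S : Submodule ℝ (Fin k → ℝ)} (h : ∀ q, M q *ᵥ x ∈ S)
    (v : Fin Qn → ℝ) : Fintype.linearCombination ℝ M v *ᵥ x ∈ S := by
  rw [linearCombination_mulVec, Fintype.linearCombination_apply]
  exact S.sum_mem fun q _ => S.smul_mem _ (h q)

lemma mulVec_mem_of_span_eq_top {P : Set (Fin Qn → ℝ)} (hP : Submodule.span ℝ P = ⊤)
    {S : Submodule ℝ (Fin k → ℝ)} (h : ∀ v ∈ P, Fintype.linearCombination ℝ M v *ᵥ x ∈ S)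
    (q : Fin Qn) : M q *ᵥ x ∈ S := by
  have hle : Submodule.span ℝ P ≤ S.comap (Fintype.linearCombination ℝ fun q => M q *ᵥ x) :=
    Submodule.span_le.2 fun v hv => by simpa [linearCombination_mulVec] using h v hv
  have hq := hle (hP ▸ Submodule.mem_top : Pi.single q 1 ∈ Submodule.span ℝ P)
  rwa [Submodule.mem_comap, Fintype.linearCombination_apply_single, one_smul] at hq

end LinearCombination

section Unobservable

variable {Qn n m pd : ℕ} (A : Fin Qn → Matrix (Fin n) (Fin n) ℝ)
  (B : Fin Qn → Matrix (Fin n) (Fin m) ℝ) (C : Fin Qn → Matrix (Fin pd) (Fin n) ℝ)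

def lpvTransition (p : ℕ → Fin Qn → ℝ) : ℕ → Matrix (Fin n) (Fin n) ℝ
  | 0 => 1
  | t + 1 => Fintype.linearCombination ℝ A (p t) * lpvTransition p t

lemma lpvTransition_cons (v : Fin Qn → ℝ) (p : ℕ → Fin Qn → ℝ) (t : ℕ) :
    lpvTransition A (fun | 0 => v | s + 1 => p s) (t + 1)
      = lpvTransition A p t * Fintype.linearCombination ℝ A v := by
  induction t with
  | zero => simp [lpvTransition]
  | succ t ih => rw [lpvTransition, ih, lpvTransition, mul_assoc]

lemma lpvState_sub (u : ℕ → Fin m → ℝ) (p : ℕ → Fin Qn → ℝ) (x1 x2 : Fin n → ℝ) (t : ℕ) :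
    lpvState A B u p x1 t - lpvState A B u p x2 t = lpvTransition A p t *ᵥ (x1 - x2) := by
  induction t with
  | zero => simp [lpvState, lpvTransition]
  | succ t ih =>
    rw [lpvState, lpvState, lpvTransition, ← mulVec_mulVec, ← ih, linearCombination_mulVec,
      Fintype.linearCombination_apply, ← Finset.sum_sub_distrib]
    simp [← smul_sub, mulVec_sub]

lemma lpvOutput_sub (u : ℕ → Fin m → ℝ) (p : ℕ → Fin Qn → ℝ) (x1 x2 : Fin n → ℝ) (t : ℕ) :
    lpvOutput A B C u p x1 t - lpvOutput A B C u p x2 t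
      = (Fintype.linearCombination ℝ C (p t) * lpvTransition A p t) *ᵥ (x1 - x2) := by
  rw [← mulVec_mulVec, ← lpvState_sub A B u, linearCombination_mulVec,
    Fintype.linearCombination_apply, lpvOutput, lpvOutput, ← Finset.sum_sub_distrib]
  simp [← smul_sub, mulVec_sub]

def unobservableSubspace (P : Set (Fin Qn → ℝ)) : Submodule ℝ (Fin n → ℝ) :=
  ⨅ (p : ℕ → Fin Qn → ℝ) (_ : ∀ s, p s ∈ P) (t : ℕ),
    LinearMap.ker (mulVecLin (Fintype.linearCombination ℝ C (p t) * lpvTransition A p t))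

lemma lpvOutput_eq_iff (u : ℕ → Fin m → ℝ) (p : ℕ → Fin Qn → ℝ) (x1 x2 : Fin n → ℝ) (t : ℕ) :
    lpvOutput A B C u p x1 t = lpvOutput A B C u p x2 t
      ↔ (Fintype.linearCombination ℝ C (p t) * lpvTransition A p t) *ᵥ (x1 - x2) = 0 := by
  rw [← sub_eq_zero, lpvOutput_sub]

variable {A C} in
lemma mem_unobservableSubspace_iff {P : Set (Fin Qn → ℝ)} {x : Fin n → ℝ} :
    x ∈ unobservableSubspace A C P ↔ ∀ p : ℕ → Fin Qn → ℝ, (∀ s, p s ∈ P) →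
      ∀ t, (Fintype.linearCombination ℝ C (p t) * lpvTransition A p t) *ᵥ x = 0 := by
  simp [unobservableSubspace]

lemma indistinguishable_iff_sub_mem_unobservableSubspace (P : Set (Fin Qn → ℝ))
    (x1 x2 : Fin n → ℝ) :
    (∀ (u : ℕ → Fin m → ℝ) (p : ℕ → Fin Qn → ℝ), (∀ s, p s ∈ P) →
        ∀ t, lpvOutput A B C u p x1 t = lpvOutput A B C u p x2 t) ↔
      x1 - x2 ∈ unobservableSubspace A C P := by
  simp only [lpvOutput_eq_iff, mem_unobservableSubspace_iff]
  exact ⟨fun h => h 0, fun h _ => h⟩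

lemma wordKernel_le_unobservableSubspace (P : Set (Fin Qn → ℝ)) :
    wordKernel A C ≤ unobservableSubspace A C P := by
  intro x hx
  have hstate : ∀ p t, lpvTransition A p t *ᵥ x ∈ wordKernel A C := by
    intro p t
    induction t with
    | zero => simpa [lpvTransition] using hx
    | succ t ih =>
      rw [lpvTransition, ← mulVec_mulVec]
      exact linearCombination_mulVec_mem (fun q => mulVec_mem_wordKernel A C ih q) _
  refine mem_unobservableSubspace_iff.2 fun p _ t => ?_
  rw [← mulVec_mulVec, ← Submodule.mem_bot ℝ]
  exact linearCombination_mulVec_mem (fun q => by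
    simpa using mulVec_eq_zero_of_mem_wordKernel A C (hstate p t) q) _

lemma unobservableSubspace_le_wordKernel {P : Set (Fin Qn → ℝ)}
    (hP : Submodule.span ℝ P = ⊤) : unobservableSubspace A C P ≤ wordKernel A C := by
  refine le_wordKernel A C (fun x hx r => ?_) (fun x hx r => ?_)
  · refine mulVec_mem_of_span_eq_top hP (fun v hv => ?_) r
    refine mem_unobservableSubspace_iff.2 fun p hp t => ?_
    have := mem_unobservableSubspace_iff.1 hx (fun | 0 => v | s + 1 => p s)
      (fun | 0 => hv | s + 1 => hp s) (t + 1)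
    rwa [lpvTransition_cons, ← Matrix.mul_assoc, ← mulVec_mulVec] at this
  · rw [← Submodule.mem_bot ℝ]
    refine mulVec_mem_of_span_eq_top hP (fun v hv => ?_) r
    simpa [lpvTransition] using mem_unobservableSubspace_iff.1 hx (fun _ => v) (fun _ => hv) 0

lemma unobservableSubspace_eq_wordKernel {P : Set (Fin Qn → ℝ)}
    (hP : Submodule.span ℝ P = ⊤) : unobservableSubspace A C P = wordKernel A C :=
  (unobservableSubspace_le_wordKernel A C hP).antisymm (wordKernel_le_unobservableSubspace A C P)

end Unobservable

/-- If the scheduling set `P` spans `ℝ^Q`, then two states `x1, x2` are indistinguishable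
for all inputs and scheduling signals with values in `P` iff they are indistinguishable
for scheduling signals with values in the standard basis `{e_1,…,e_Q}`, iff
`x1 - x2 ∈ ⋂ ker (C_{q_k} A_{q_{k-1}} ⋯ A_{q_1})`. -/
theorem stmt14 {Qn n m pd : ℕ}
    (A : Fin Qn → Matrix (Fin n) (Fin n) ℝ)
    (B : Fin Qn → Matrix (Fin n) (Fin m) ℝ)
    (C : Fin Qn → Matrix (Fin pd) (Fin n) ℝ)
    (P : Set (Fin Qn → ℝ)) (hP : Submodule.span ℝ P = ⊤)
    (x1 x2 : Fin n → ℝ) :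
    ((∀ (u : ℕ → Fin m → ℝ) (p : ℕ → Fin Qn → ℝ), (∀ s, p s ∈ P) →
        ∀ t, lpvOutput A B C u p x1 t = lpvOutput A B C u p x2 t) ↔
      (∀ (u : ℕ → Fin m → ℝ) (p : ℕ → Fin Qn → ℝ),
        (∀ s, p s ∈ Set.range fun q : Fin Qn => (Pi.single q 1 : Fin Qn → ℝ)) →
        ∀ t, lpvOutput A B C u p x1 t = lpvOutput A B C u p x2 t)) ∧
    ((∀ (u : ℕ → Fin m → ℝ) (p : ℕ → Fin Qn → ℝ), (∀ s, p s ∈ P) →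
        ∀ t, lpvOutput A B C u p x1 t = lpvOutput A B C u p x2 t) ↔
      x1 - x2 ∈ ⨅ (k : ℕ) (q : Fin (k+1) → Fin Qn),
        LinearMap.ker (Matrix.mulVecLin (C (q (Fin.last k)) * wordProd A (Fin.init q)))) := by
  have hP' := indistinguishable_iff_sub_mem_unobservableSubspace A B C P x1 x2
  have hE := indistinguishable_iff_sub_mem_unobservableSubspace A B C
    (Set.range fun q : Fin Qn => (Pi.single q 1 : Fin Qn → ℝ)) x1 x2
  rw [unobservableSubspace_eq_wordKernel A C hP] at hP'
  rw [unobservableSubspace_eq_wordKernel A C (span_range_single Qn)] at hE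
  exact ⟨hP'.trans hE.symm, hP'⟩
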